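/- With c_k = (λ^{k+1} − μ^{k+1})/√13 and d_k = [((7−√13)/2)λ^{k+1} − ((7+√13)/2)μ^{k+1}]/√13, where λ = (3+√13)/2 and μ = (3−√13)/2, we have 9c_k² − 7c_k d_k + d_k² = (−1)^{k+1} for all k ≥ 0. -/

import Mathlib

noncomputable def lamE : ℝ := (3 + Real.sqrt 13) / 2
noncomputable def muE : ℝ := (3 - Real.sqrt 13) / 2

noncomputable def cseq (k : ℕ) : ℝ := (lamE ^ (k + 1) - muE ^ (k + 1)) / Real.sqrt 13

noncomputable def dseq (k : ℕ) : ℝ :=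
  ((7 - Real.sqrt 13) / 2 * lamE ^ (k + 1) - (7 + Real.sqrt 13) / 2 * muE ^ (k + 1)) /
    Real.sqrt 13

/-! Completing the square, `9c² - 7cd + d² = (d - 7c/2)² - (√13 c)² / 4`. Here
`√13 c = λ^(k+1) - μ^(k+1)` and `d - 7c/2 = -(λ^(k+1) + μ^(k+1)) / 2`, so the form equals
`(λμ)^(k+1)`, and `λμ = -1`. -/

lemma sq_sqrt_thirteen : Real.sqrt 13 ^ 2 = 13 := Real.sq_sqrt (by norm_num)

lemma lamE_mul_muE : lamE * muE = -1 := by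
  unfold lamE muE
  linear_combination (-1 / 4 : ℝ) * sq_sqrt_thirteen

lemma sqrt_thirteen_mul_cseq (k : ℕ) :
    Real.sqrt 13 * cseq k = lamE ^ (k + 1) - muE ^ (k + 1) := by
  unfold cseq
  field_simp

lemma dseq_sub_cseq (k : ℕ) :
    dseq k - 7 / 2 * cseq k = -(lamE ^ (k + 1) + muE ^ (k + 1)) / 2 := by
  unfold dseq cseq
  field_simp
  ring

theorem c_d_identity (k : ℕ) :
    9 * cseq k ^ 2 - 7 * cseq k * dseq k + dseq k ^ 2 = (-1 : ℝ) ^ (k + 1) := by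
  calc 9 * cseq k ^ 2 - 7 * cseq k * dseq k + dseq k ^ 2
      = (dseq k - 7 / 2 * cseq k) ^ 2 - (Real.sqrt 13 * cseq k) ^ 2 / 4 := by
        rw [mul_pow, sq_sqrt_thirteen]; ring
    _ = (lamE * muE) ^ (k + 1) := by
        rw [dseq_sub_cseq, sqrt_thirteen_mul_cseq]; ring
    _ = (-1) ^ (k + 1) := by rw [lamE_mul_muE]
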